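/- In the rational vector space Q^n with weight vectors w_{0i} = e_i (1 ≤ i ≤ n) and w_{jk} = e_j + e_k (1 ≤ j < k ≤ n), the cone generated by {w_{jk} : {j,k} ∈ J} where J is defined from an exchange-closed set I as J = (I ∩ pairs from {1,...,n}) ∪ {{i,j} : {0,i},{0,j} ∈ I}, equals the intersection of the cone generated by {w_η : η ∈ I} with the cone Ω* = cone(e_i + e_j : 1 ≤ i < j ≤ n). -/

import Mathlib

open Finset

/-- The convex cone generated by a set of vectors: all finite nonnegative
rational linear combinations. -/
def coneOf {m : ℕ} (S : Set (Fin m → ℚ)) : Set (Fin m → ℚ) :=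
  {x | ∃ (r : ℕ) (c : Fin r → ℚ) (v : Fin r → Fin m → ℚ),
    (∀ i, 0 ≤ c i) ∧ (∀ i, v i ∈ S) ∧ x = ∑ i, c i • v i}

/-- `evec n i` is `eᵢ` for `i ≠ 0` and `0` for `i = 0`, so that the weight of the
pair `{i,j}` is `evec n i + evec n j`: `w_{0i} = eᵢ` and `w_{jk} = eⱼ + eₖ`. -/
def evec (n : ℕ) (i : Fin (n + 1)) : Fin (n + 1) → ℚ :=
  if i = 0 then 0 else Pi.single i 1

/-- The set `J = (I ∩ pairs from {1,…,n}) ∪ {{i,j} : {0,i} ∈ I and {0,j} ∈ I}`. -/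
def Jset (n : ℕ) (I : Set (Sym2 (Fin (n + 1)))) : Set (Sym2 (Fin (n + 1))) :=
  {e | (e ∈ I ∧ (0 : Fin (n + 1)) ∉ e) ∨
    ∃ a b : Fin (n + 1), a ≠ 0 ∧ b ≠ 0 ∧ a ≠ b ∧ e = s(a, b) ∧
      s((0 : Fin (n + 1)), a) ∈ I ∧ s((0 : Fin (n + 1)), b) ∈ I}

/-!
A vector `x ∈ ω_I` splits as `y + d`, where `y` is a cone combination of the `w_{jk}` with
`{j,k} ∈ I` and `j, k ≠ 0`, and `d ≥ 0` is supported on the set `T` of neighbours of `0` in `I`.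
Membership in `Ω*` gives `2 x_k ≤ ∑ x` for every `k`. A nonnegative vector with `2 d_k ≤ ∑ d` for
all `k` is a cone combination of the `e_p + e_q` with `p ≠ q` in its support, i.e. of generators
of `ω_J`. If `d` violates this at `a`, the excess `ε = 2 d_a - ∑ d` is moved to `y`: the inequality
for `x` at `a` bounds `ε` by twice the weight of the edges `{p,q}` of `y` avoiding `a`, and by the
exchange condition `2 eₐ + e_p + e_q = w_{ap} + w_{aq}` with `{a,p}, {a,q} ∈ J`.
-/

lemma sum_single_add_single {R ι : Type*} [AddCommMonoidWithOne R] [Fintype ι] [DecidableEq ι]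
    (p q : ι) : ∑ k, (Pi.single p 1 + Pi.single q 1 : ι → R) k = 2 := by
  simp [sum_add_distrib, one_add_one_eq_two]

section PairCone

variable {𝕜 ι : Type*} [Field 𝕜] [LinearOrder 𝕜] [IsStrictOrderedRing 𝕜]

lemma add_smul_apply_ne_zero {x y : ι → 𝕜} (hx : 0 ≤ x) (hy : 0 ≤ y) {t : 𝕜} (ht : 0 ≤ t)
    {k : ι} (hk : x k ≠ 0) : (x + t • y) k ≠ 0 :=
  (add_pos_of_pos_of_nonneg ((hx k).lt_of_ne' hk) (mul_nonneg ht (hy k))).ne'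

variable [DecidableEq ι]

variable (𝕜) in
def pairCone (r : ι → ι → Prop) : PointedCone 𝕜 (ι → 𝕜) :=
  PointedCone.hull 𝕜 {v | ∃ p q, r p q ∧ v = Pi.single p 1 + Pi.single q 1}

lemma single_add_single_mem_pairCone {r : ι → ι → Prop} {p q : ι} (h : r p q) :
    Pi.single p 1 + Pi.single q 1 ∈ pairCone 𝕜 r :=
  Submodule.subset_span ⟨p, q, h, rfl⟩

lemma pairCone_mono {r r' : ι → ι → Prop} (h : ∀ p q, r p q → r' p q) :
    pairCone 𝕜 r ≤ pairCone 𝕜 r' :=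
  Submodule.span_le.mpr fun _ ⟨p, q, hpq, hv⟩ => hv ▸ single_add_single_mem_pairCone (h p q hpq)

lemma nonneg_and_support_subset_of_mem_hull_single {T : Set ι} {d : ι → 𝕜}
    (hd : d ∈ PointedCone.hull 𝕜 ((fun p => Pi.single p 1) '' T)) :
    0 ≤ d ∧ ∀ k, d k ≠ 0 → k ∈ T := by
  induction hd using Submodule.span_induction with
  | mem v hv =>
    obtain ⟨p, hp, rfl⟩ := hv
    refine ⟨Pi.single_nonneg.mpr zero_le_one, fun k hk => ?_⟩
    rcases eq_or_ne k p with rfl | hkp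
    · exact hp
    · simp [hkp] at hk
  | zero => simp
  | add x y _ _ hx hy =>
    refine ⟨add_nonneg hx.1 hy.1, fun k hk => ?_⟩
    by_cases hxk : x k = 0
    · exact hy.2 k (by simpa [hxk] using hk)
    · exact hx.2 k hxk
  | smul c x _ hx =>
    exact ⟨fun k => mul_nonneg c.2 (hx.1 k), fun k hk => hx.2 k (by simpa using hk : _ ∧ _).2⟩

variable [Fintype ι]

lemma two_mul_apply_le_sum_of_mem_pairCone {r : ι → ι → Prop} (hr : ∀ p q, r p q → p ≠ q)
    {x : ι → 𝕜} (hx : x ∈ pairCone 𝕜 r) (k : ι) : 2 * x k ≤ ∑ i, x i := by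
  induction hx using Submodule.span_induction with
  | mem v hv =>
    obtain ⟨p, q, hpq, rfl⟩ := hv
    rw [sum_single_add_single]
    rcases eq_or_ne k p with rfl | hkp
    · simp [(hr k q hpq).symm]
    rcases eq_or_ne k q with rfl | hkq
    · simp [hkp]
    · simp [hkp, hkq]
  | zero => simp
  | add x y _ _ hx hy => simp only [Pi.add_apply, sum_add_distrib]; linarith
  | smul c x _ hx =>
    simp only [← Nonneg.coe_smul, Pi.smul_apply, smul_eq_mul, ← mul_sum]
    nlinarith [c.2]

lemma add_smul_single_mem_pairCone {r : ι → ι → Prop} (hr : ∀ p q, r p q → p ≠ q) {a : ι}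
    (ha : ∀ p q, r p q → a ≠ p → a ≠ q → r a p ∧ r a q) {y : ι → 𝕜} (hy : y ∈ pairCone 𝕜 r)
    {ε : 𝕜} (hε : 0 ≤ ε) (hεy : ε ≤ ∑ i, y i - 2 * y a) :
    y + ε • Pi.single a 1 ∈ pairCone 𝕜 r := by
  induction hy using Submodule.span_induction generalizing ε with
  | mem v hv =>
    obtain ⟨p, q, hpq, rfl⟩ := hv
    rw [sum_single_add_single] at hεy
    by_cases hapq : a = p ∨ a = q
    · have hε0 : ε = 0 := by
        rcases hapq with rfl | rfl
        · simp only [Pi.add_apply, Pi.single_eq_same, Pi.single_eq_of_ne (hr a q hpq)] at hεy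
          linarith
        · simp only [Pi.add_apply, Pi.single_eq_same, Pi.single_eq_of_ne (hr p a hpq).symm] at hεy
          linarith
      simpa [hε0] using single_add_single_mem_pairCone hpq
    · obtain ⟨hap0, haq0⟩ := not_or.mp hapq
      obtain ⟨hap, haq⟩ := ha p q hpq hap0 haq0
      simp only [Pi.add_apply, Pi.single_eq_of_ne hap0, Pi.single_eq_of_ne haq0] at hεy
      have hsplit : Pi.single p 1 + Pi.single q 1 + ε • Pi.single a 1 =
          (1 - ε / 2) • (Pi.single p 1 + Pi.single q 1) +
            (ε / 2) • (Pi.single a 1 + Pi.single p 1) +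
            (ε / 2) • (Pi.single a 1 + Pi.single q 1 : ι → 𝕜) := by module
      rw [hsplit]
      refine add_mem (add_mem ?_ ?_) ?_ <;> refine PointedCone.smul_mem _ (by linarith) ?_
      exacts [single_add_single_mem_pairCone hpq, single_add_single_mem_pairCone hap,
        single_add_single_mem_pairCone haq]
  | zero =>
    obtain rfl : ε = 0 := le_antisymm (by simpa using hεy) hε
    simp
  | add x z hx hz ihx ihz =>
    have hφz := two_mul_apply_le_sum_of_mem_pairCone hr hz a
    simp only [Pi.add_apply, sum_add_distrib] at hεy
    set ε₁ := min ε (∑ i, x i - 2 * x a)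
    have hε₁ : 0 ≤ ε₁ := le_min hε (by linarith [two_mul_apply_le_sum_of_mem_pairCone hr hx a])
    have hε₂ : ε - ε₁ ≤ ∑ i, z i - 2 * z a := by
      rcases min_cases ε (∑ i, x i - 2 * x a) with ⟨h, -⟩ | ⟨h, -⟩ <;> linarith
    rw [show x + z + ε • Pi.single a 1 =
      (x + ε₁ • Pi.single a 1) + (z + (ε - ε₁) • Pi.single a 1) by module]
    exact add_mem (ihx hε₁ (min_le_right _ _)) (ihz (sub_nonneg.2 (min_le_left _ _)) hε₂)
  | smul c x _ ih =>
    obtain ⟨c, hc⟩ := c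
    simp only [Nonneg.mk_smul, Pi.smul_apply, smul_eq_mul, ← mul_sum] at hεy ⊢
    rcases hc.eq_or_lt with rfl | hc
    · obtain rfl : ε = 0 := le_antisymm (by simpa using hεy) hε
      simp
    · have hsplit : c • x + ε • Pi.single a 1 = c • (x + (ε / c) • Pi.single a 1) := by
        rw [smul_add, smul_smul, mul_div_cancel₀ _ hc.ne']
      rw [hsplit]
      refine PointedCone.smul_mem _ hc.le (ih (div_nonneg hε hc.le) ?_)
      rw [div_le_iff₀ hc]
      linarith

lemma mem_pairCone_of_two_mul_eq_sum {T : Set ι} {d : ι → 𝕜} (hd : 0 ≤ d)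
    (hdT : ∀ k, d k ≠ 0 → k ∈ T) {k : ι} (hk : 2 * d k = ∑ i, d i) :
    d ∈ pairCone 𝕜 (fun p q => p ∈ T ∧ q ∈ T ∧ p ≠ q) := by
  have hrest : ∑ p ∈ univ.erase k, d p = d k := by
    have := add_sum_erase univ d (mem_univ k)
    linarith
  have hd_eq : d = ∑ p ∈ univ.erase k, d p • (Pi.single k 1 + Pi.single p 1) := by
    simp_rw [smul_add, sum_add_distrib, ← sum_smul, hrest,
      add_sum_erase univ (fun p => d p • Pi.single p (1 : 𝕜)) (mem_univ k)]
    ext i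
    simp [Pi.single_apply]
  rw [hd_eq]
  refine Submodule.sum_mem _ fun p hp => ?_
  rcases eq_or_ne (d p) 0 with h | h
  · simp [h]
  · have hdk : d k ≠ 0 := by
      have : d p ≤ d k := hrest ▸ single_le_sum (fun i _ => hd i) hp
      exact (lt_of_lt_of_le ((hd p).lt_of_ne' h) this).ne'
    exact PointedCone.smul_mem _ (hd p)
      (single_add_single_mem_pairCone ⟨hdT k hdk, hdT p h, (ne_of_mem_erase hp).symm⟩)

lemma exists_sub_pair_of_two_mul_lt_sum {d : ι → 𝕜} (hd : 0 ≤ d) (hne : d ≠ 0)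
    (hlt : ∀ k, 2 * d k < ∑ i, d i) :
    ∃ (p q : ι) (t : 𝕜) (d' : ι → 𝕜), p ≠ q ∧ d p ≠ 0 ∧ d q ≠ 0 ∧ 0 ≤ t ∧
      d = d' + t • (Pi.single p 1 + Pi.single q 1) ∧ 0 ≤ d' ∧
      (∀ k, 2 * d' k ≤ ∑ i, d' i) ∧ (d' q = 0 ∨ ∃ k, 2 * d' k = ∑ i, d' i) := by
  obtain ⟨k₀, hk₀⟩ : ∃ k, d k ≠ 0 := by simpa [funext_iff] using hne
  -- `i` is a largest coordinate, `j ≠ i` another one in the support and `m` a largest one off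
  -- `{i, j}` (it exists since `d i + d j ≤ 2 d i < ∑ d`). The step `t` is the largest one that
  -- keeps `2 d' k ≤ ∑ d'` for all `k`: it either empties `j` or gives equality at `m`.
  obtain ⟨i, -, hi⟩ := exists_max_image univ d ⟨k₀, mem_univ k₀⟩
  have hdi : 0 < d i := ((hd k₀).lt_of_ne' hk₀).trans_le (hi k₀ (mem_univ k₀))
  have hsum_i := add_sum_erase univ d (mem_univ i)
  obtain ⟨j, hj, hdj⟩ := exists_ne_zero_of_sum_ne_zero
    (by linarith [hlt i] : ∑ k ∈ univ.erase i, d k ≠ 0)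
  have hsum_ij := add_sum_erase _ d hj
  obtain ⟨m₀, hm₀, -⟩ := exists_ne_zero_of_sum_ne_zero
    (by linarith [hlt i, hi j (mem_univ j)] : ∑ k ∈ (univ.erase i).erase j, d k ≠ 0)
  obtain ⟨m, hm, hmax⟩ := exists_max_image ((univ.erase i).erase j) d ⟨m₀, hm₀⟩
  have hij : i ≠ j := (ne_of_mem_erase hj).symm
  have hmj : m ≠ j := ne_of_mem_erase hm
  have hmi : m ≠ i := ne_of_mem_erase (mem_of_mem_erase hm)
  set S := ∑ i, d i
  set t := min (d j) (S / 2 - d m)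
  set d' := d - t • (Pi.single i 1 + Pi.single j 1 : ι → 𝕜)
  have hd'i : d' i = d i - t := by simp [d', hij]
  have hd'j : d' j = d j - t := by simp [d', hij.symm]
  have hd'k : ∀ k, k ≠ i → k ≠ j → d' k = d k := fun k hki hkj => by simp [d', hki, hkj]
  have hsum' : ∑ k, d' k = S - 2 * t := by
    simp only [d', Pi.sub_apply, Pi.smul_apply, smul_eq_mul, sum_sub_distrib, ← mul_sum,
      sum_single_add_single]
    ring
  have htj : t ≤ d j := min_le_left _ _
  have htm : t ≤ S / 2 - d m := min_le_right _ _
  have hdji : d j ≤ d i := hi j (mem_univ j)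
  refine ⟨i, j, t, d', hij, hdi.ne', hdj, le_min (hd j) (by linarith [hlt m]),
    (sub_add_cancel _ _).symm, fun k => ?_, fun k => ?_, ?_⟩
  · by_cases hki : k = i
    · subst hki; rw [Pi.zero_apply, hd'i]; linarith
    by_cases hkj : k = j
    · subst hkj; rw [Pi.zero_apply, hd'j]; linarith
    · rw [Pi.zero_apply, hd'k k hki hkj]; exact hd k
  · rw [hsum']
    by_cases hki : k = i
    · subst hki; rw [hd'i]; linarith [hlt k]
    by_cases hkj : k = j
    · subst hkj; rw [hd'j]; linarith [hlt i]
    · rw [hd'k k hki hkj]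
      linarith [hmax k (mem_erase.mpr ⟨hkj, mem_erase.mpr ⟨hki, mem_univ k⟩⟩)]
  · rcases min_cases (d j) (S / 2 - d m) with ⟨ht, -⟩ | ⟨ht, -⟩
    · exact .inl (by rw [hd'j, show t = d j from ht, sub_self])
    · exact .inr ⟨m, by rw [hsum', hd'k m hmi hmj, show t = S / 2 - d m from ht]; ring⟩

lemma mem_pairCone_of_two_mul_le_sum {T : Set ι} {d : ι → 𝕜} (hd : 0 ≤ d)
    (hdT : ∀ k, d k ≠ 0 → k ∈ T) (hbal : ∀ k, 2 * d k ≤ ∑ i, d i) :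
    d ∈ pairCone 𝕜 (fun p q => p ∈ T ∧ q ∈ T ∧ p ≠ q) := by
  induction hN : #{k | d k ≠ 0} using Nat.strong_induction_on generalizing d with
  | _ N ih =>
  by_cases htight : ∃ k, 2 * d k = ∑ i, d i
  · obtain ⟨k, hk⟩ := htight
    exact mem_pairCone_of_two_mul_eq_sum hd hdT hk
  rcases eq_or_ne d 0 with rfl | hne
  · exact zero_mem _
  have hlt : ∀ k, 2 * d k < ∑ i, d i := fun k => (hbal k).lt_of_ne fun h => htight ⟨k, h⟩
  obtain ⟨p, q, t, d', hpq, hp, hq, ht, rfl, hd', hd'bal, hd'q⟩ :=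
    exists_sub_pair_of_two_mul_lt_sum hd hne hlt
  have hsupp : ∀ k, d' k ≠ 0 → (d' + t • (Pi.single p 1 + Pi.single q 1 : ι → 𝕜)) k ≠ 0 :=
    fun k => add_smul_apply_ne_zero hd'
      (add_nonneg (Pi.single_nonneg.2 zero_le_one) (Pi.single_nonneg.2 zero_le_one)) ht
  have hd'T : ∀ k, d' k ≠ 0 → k ∈ T := fun k hk => hdT k (hsupp k hk)
  refine add_mem ?_ (PointedCone.smul_mem _ ht
    (single_add_single_mem_pairCone ⟨hdT p hp, hdT q hq, hpq⟩))
  rcases hd'q with hd'q | ⟨k, hk⟩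
  · refine ih _ ?_ hd' hd'T hd'bal rfl
    rw [← hN]
    refine card_lt_card ⟨fun k => by simpa using hsupp k, fun h => ?_⟩
    simpa [hd'q] using h (mem_filter.mpr ⟨mem_univ q, hq⟩)
  · exact mem_pairCone_of_two_mul_eq_sum hd' hd'T hk

lemma exists_sub_smul_single_balanced {d : ι → 𝕜} (hd : 0 ≤ d) {a : ι} (ha : ∀ k, d k ≤ d a) :
    ∃ (ε : 𝕜) (d' : ι → 𝕜), 0 ≤ ε ∧ ε ≤ max 0 (2 * d a - ∑ i, d i) ∧
      d = d' + ε • Pi.single a 1 ∧ 0 ≤ d' ∧ ∀ k, 2 * d' k ≤ ∑ i, d' i := by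
  have hsum_a := add_sum_erase univ d (mem_univ a)
  have hrest := sum_nonneg fun i (_ : i ∈ univ.erase a) => hd i
  have hk : ∀ k, k ≠ a → d k ≤ ∑ i ∈ univ.erase a, d i := fun k hk =>
    single_le_sum (fun i _ => hd i) (mem_erase.mpr ⟨hk, mem_univ k⟩)
  set ε := max 0 (2 * d a - ∑ i, d i)
  have hε : ε ≤ d a := max_le (hd a) (by linarith)
  set d' := d - ε • (Pi.single a 1 : ι → 𝕜)
  have hsum' : ∑ i, d' i = ∑ i, d i - ε := by simp [d', sum_sub_distrib, ← mul_sum]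
  refine ⟨ε, d', le_max_left _ _, le_rfl, (sub_add_cancel _ _).symm,
    fun k => ?_, fun k => ?_⟩
  · rcases eq_or_ne k a with rfl | hka
    · simpa [d'] using hε
    · simpa [d', hka] using hd k
  · rw [hsum']
    rcases eq_or_ne k a with rfl | hka
    · simp only [d', Pi.sub_apply, Pi.smul_apply, Pi.single_eq_same, smul_eq_mul, mul_one]
      linarith [le_max_right 0 (2 * d k - ∑ i, d i)]
    · simp only [d', Pi.sub_apply, Pi.smul_apply, Pi.single_eq_of_ne hka, smul_eq_mul, mul_zero,
        sub_zero]
      linarith [max_le (by linarith [hk k hka, ha k] : (0 : 𝕜) ≤ ∑ i, d i - 2 * d k)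
        (by linarith [hk k hka] : 2 * d a - ∑ i, d i ≤ ∑ i, d i - 2 * d k)]

end PairCone

lemma coneOf_eq_hull {m : ℕ} (S : Set (Fin m → ℚ)) : coneOf S = PointedCone.hull ℚ S := by
  ext x
  simp only [coneOf, Set.mem_ofPred_eq, SetLike.mem_coe, Submodule.mem_span_set']
  constructor
  · rintro ⟨r, c, v, hc, hv, rfl⟩
    exact ⟨r, fun i => ⟨c i, hc i⟩, fun i => ⟨v i, hv i⟩, rfl⟩
  · rintro ⟨r, c, v, rfl⟩
    exact ⟨r, fun i => c i, fun i => v i, fun i => (c i).2, fun i => (v i).2, rfl⟩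

section Exchange

variable {n : ℕ} {I : Set (Sym2 (Fin (n + 1)))}

lemma evec_zero : evec n 0 = 0 := if_pos rfl

lemma evec_of_ne_zero {i : Fin (n + 1)} (hi : i ≠ 0) : evec n i = Pi.single i 1 := if_neg hi

lemma coneOf_evec_eq_pairCone (r : Fin (n + 1) → Fin (n + 1) → Prop)
    (hr : ∀ i j, r i j → i ≠ 0 ∧ j ≠ 0) :
    coneOf {w | ∃ i j, r i j ∧ w = evec n i + evec n j} = pairCone ℚ r := by
  rw [coneOf_eq_hull, pairCone]
  congr 2
  ext w
  refine exists₂_congr fun i j => and_congr_right fun hij => ?_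
  rw [evec_of_ne_zero (hr i j hij).1, evec_of_ne_zero (hr i j hij).2]

lemma mem_Jset_iff {p q : Fin (n + 1)} :
    s(p, q) ∈ Jset n I ↔
      p ≠ 0 ∧ q ≠ 0 ∧ (s(p, q) ∈ I ∨ p ≠ q ∧ s(0, p) ∈ I ∧ s(0, q) ∈ I) := by
  simp only [Jset, Set.mem_ofPred_eq, Sym2.mem_iff, Sym2.eq_iff, not_or]
  constructor
  · rintro (⟨h, h0p, h0q⟩ | ⟨a, b, ha, hb, hab, (⟨rfl, rfl⟩ | ⟨rfl, rfl⟩), h0a, h0b⟩)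
    · exact ⟨Ne.symm h0p, Ne.symm h0q, .inl h⟩
    · exact ⟨ha, hb, .inr ⟨hab, h0a, h0b⟩⟩
    · exact ⟨hb, ha, .inr ⟨hab.symm, h0b, h0a⟩⟩
  · rintro ⟨hp, hq, h | ⟨hpq, h0p, h0q⟩⟩
    · exact .inl ⟨h, Ne.symm hp, Ne.symm hq⟩
    · exact .inr ⟨p, q, hp, hq, hpq, .inl ⟨rfl, rfl⟩, h0p, h0q⟩

lemma ne_of_mem_Jset (hdiag : ∀ i : Fin (n + 1), s(i, i) ∉ I) {p q : Fin (n + 1)}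
    (h : s(p, q) ∈ Jset n I) : p ≠ q := by
  rintro rfl
  obtain ⟨-, -, h | ⟨hpp, -⟩⟩ := mem_Jset_iff.mp h
  exacts [hdiag p h, hpp rfl]

lemma Jset_exchange
    (hex : ∀ i j k l : Fin (n + 1), s(i, j) ∈ I → s(k, l) ∈ I →
      (s(j, l) ∈ I ∧ s(i, k) ∈ I) ∨ (s(j, k) ∈ I ∧ s(i, l) ∈ I))
    {a : Fin (n + 1)} (ha : a ≠ 0) (haI : s(0, a) ∈ I) {p q : Fin (n + 1)}
    (hpq : s(p, q) ∈ Jset n I) (hap : a ≠ p) (haq : a ≠ q) :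
    s(a, p) ∈ Jset n I ∧ s(a, q) ∈ Jset n I := by
  obtain ⟨hp, hq, hpqI | ⟨-, hpI, hqI⟩⟩ := mem_Jset_iff.mp hpq
  · rcases hex 0 a p q haI hpqI with ⟨haqI, hpI⟩ | ⟨hapI, hqI⟩
    · exact ⟨mem_Jset_iff.mpr ⟨ha, hp, .inr ⟨hap, haI, hpI⟩⟩, mem_Jset_iff.mpr ⟨ha, hq, .inl haqI⟩⟩
    · exact ⟨mem_Jset_iff.mpr ⟨ha, hp, .inl hapI⟩, mem_Jset_iff.mpr ⟨ha, hq, .inr ⟨haq, haI, hqI⟩⟩⟩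
  · exact ⟨mem_Jset_iff.mpr ⟨ha, hp, .inr ⟨hap, haI, hpI⟩⟩,
      mem_Jset_iff.mpr ⟨ha, hq, .inr ⟨haq, haI, hqI⟩⟩⟩

lemma hull_evec_le_sup :
    PointedCone.hull ℚ {w | ∃ i j, s(i, j) ∈ I ∧ w = evec n i + evec n j} ≤
      PointedCone.hull ℚ ((fun p => Pi.single p 1) '' {p | p ≠ 0 ∧ s(0, p) ∈ I}) ⊔
        pairCone ℚ (fun p q => s(p, q) ∈ I ∧ p ≠ 0 ∧ q ≠ 0) := by
  refine Submodule.span_le.mpr ?_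
  rintro _ ⟨i, j, hij, rfl⟩
  rcases eq_or_ne i 0 with rfl | hi <;> rcases eq_or_ne j 0 with rfl | hj
  · simp [evec_zero]
  · rw [evec_zero, zero_add, evec_of_ne_zero hj]
    exact Submodule.mem_sup_left (Submodule.subset_span ⟨j, ⟨hj, hij⟩, rfl⟩)
  · rw [evec_zero, add_zero, evec_of_ne_zero hi]
    exact Submodule.mem_sup_left (Submodule.subset_span ⟨i, ⟨hi, Sym2.eq_swap ▸ hij⟩, rfl⟩)
  · rw [evec_of_ne_zero hi, evec_of_ne_zero hj]
    exact Submodule.mem_sup_right (single_add_single_mem_pairCone ⟨hij, hi, hj⟩)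

lemma pairCone_Jset_le (hdiag : ∀ i : Fin (n + 1), s(i, i) ∉ I) :
    pairCone ℚ (fun p q => s(p, q) ∈ Jset n I) ≤
      PointedCone.hull ℚ {w | ∃ i j, s(i, j) ∈ I ∧ w = evec n i + evec n j} ⊓
        pairCone ℚ (fun i j => i ≠ 0 ∧ j ≠ 0 ∧ i ≠ j) := by
  refine Submodule.span_le.mpr ?_
  rintro _ ⟨p, q, hpq, rfl⟩
  obtain ⟨hp, hq, hpqI⟩ := mem_Jset_iff.mp hpq
  refine ⟨?_, single_add_single_mem_pairCone ⟨hp, hq, ne_of_mem_Jset hdiag hpq⟩⟩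
  rw [← evec_of_ne_zero hp, ← evec_of_ne_zero hq]
  rcases hpqI with hpqI | ⟨-, hpI, hqI⟩
  · exact Submodule.subset_span ⟨p, q, hpqI, rfl⟩
  · have hsplit : evec n p + evec n q = (evec n 0 + evec n p) + (evec n 0 + evec n q) := by
      rw [evec_zero, zero_add, zero_add]
    rw [hsplit]
    exact add_mem (Submodule.subset_span ⟨0, p, hpI, rfl⟩) (Submodule.subset_span ⟨0, q, hqI, rfl⟩)

lemma hull_inf_pairCone_le (hdiag : ∀ i : Fin (n + 1), s(i, i) ∉ I)
    (hex : ∀ i j k l : Fin (n + 1), s(i, j) ∈ I → s(k, l) ∈ I →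
      (s(j, l) ∈ I ∧ s(i, k) ∈ I) ∨ (s(j, k) ∈ I ∧ s(i, l) ∈ I)) :
    PointedCone.hull ℚ {w | ∃ i j, s(i, j) ∈ I ∧ w = evec n i + evec n j} ⊓
        pairCone ℚ (fun i j => i ≠ 0 ∧ j ≠ 0 ∧ i ≠ j) ≤
      pairCone ℚ (fun p q => s(p, q) ∈ Jset n I) := by
  rintro x ⟨hxI, hxΩ⟩
  obtain ⟨d, hd, y, hy, rfl⟩ := Submodule.mem_sup.mp (hull_evec_le_sup hxI)
  obtain ⟨hd0, hdT⟩ := nonneg_and_support_subset_of_mem_hull_single hd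
  have hJ : ∀ p q, s(p, q) ∈ Jset n I → p ≠ q := fun p q => ne_of_mem_Jset hdiag
  have hyJ : y ∈ pairCone ℚ (fun p q => s(p, q) ∈ Jset n I) :=
    pairCone_mono (fun p q ⟨h, hp, hq⟩ => mem_Jset_iff.mpr ⟨hp, hq, .inl h⟩) hy
  obtain ⟨a, ha⟩ := Finite.exists_max d
  obtain ⟨ε, d', hε, hεd, hdd', hd', hd'bal⟩ := exists_sub_smul_single_balanced hd0 ha
  have hxa := two_mul_apply_le_sum_of_mem_pairCone (fun i j h => h.2.2) hxΩ a
  have hya := two_mul_apply_le_sum_of_mem_pairCone hJ hyJ a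
  simp only [Pi.add_apply, sum_add_distrib] at hxa
  have hyε : y + ε • Pi.single a 1 ∈ pairCone ℚ (fun p q => s(p, q) ∈ Jset n I) := by
    rcases hε.eq_or_lt with rfl | hεpos
    · simpa using hyJ
    have hda : d a = d' a + ε := by simp [hdd']
    obtain ⟨ha0, haI⟩ := hdT a (by rw [hda]; exact (add_pos_of_nonneg_of_pos (hd' a) hεpos).ne')
    exact add_smul_single_mem_pairCone hJ (fun p q hpq => Jset_exchange hex ha0 haI hpq) hyJ hε
      (hεd.trans (max_le (by linarith) (by linarith)))
  have hd'J : d' ∈ pairCone ℚ (fun p q => s(p, q) ∈ Jset n I) := by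
    have hd'T : ∀ k, d' k ≠ 0 → k ∈ {p | p ≠ 0 ∧ s(0, p) ∈ I} := fun k hk =>
      hdT k (hdd' ▸ add_smul_apply_ne_zero hd' (Pi.single_nonneg.2 zero_le_one) hε hk)
    refine pairCone_mono ?_ (mem_pairCone_of_two_mul_le_sum hd' hd'T hd'bal)
    exact fun p q ⟨⟨hp, hpI⟩, ⟨hq, hqI⟩, hpq⟩ => mem_Jset_iff.mpr ⟨hp, hq, .inr ⟨hpq, hpI, hqI⟩⟩
  rw [hdd', add_assoc, add_comm (ε • _)]
  exact add_mem hd'J hyε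

end Exchange

theorem stmt_8_general (n : ℕ) (I : Set (Sym2 (Fin (n + 1))))
    (hdiag : ∀ i : Fin (n + 1), s(i, i) ∉ I)
    (hex : ∀ i j k l : Fin (n + 1), s(i, j) ∈ I → s(k, l) ∈ I →
      (s(j, l) ∈ I ∧ s(i, k) ∈ I) ∨ (s(j, k) ∈ I ∧ s(i, l) ∈ I)) :
    coneOf {w | ∃ i j : Fin (n + 1), s(i, j) ∈ Jset n I ∧ w = evec n i + evec n j}
    = coneOf {w | ∃ i j : Fin (n + 1), s(i, j) ∈ I ∧ w = evec n i + evec n j}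
      ∩ coneOf {w | ∃ i j : Fin (n + 1), i ≠ 0 ∧ j ≠ 0 ∧ i ≠ j ∧
          w = evec n i + evec n j} := by
  have hΩ : {w | ∃ i j : Fin (n + 1), i ≠ 0 ∧ j ≠ 0 ∧ i ≠ j ∧ w = evec n i + evec n j} =
      {w | ∃ i j : Fin (n + 1), (i ≠ 0 ∧ j ≠ 0 ∧ i ≠ j) ∧ w = evec n i + evec n j} := by
    simp only [and_assoc]
  rw [hΩ, coneOf_evec_eq_pairCone (fun i j => i ≠ 0 ∧ j ≠ 0 ∧ i ≠ j) fun i j h => ⟨h.1, h.2.1⟩,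
    coneOf_evec_eq_pairCone (fun i j => s(i, j) ∈ Jset n I) fun i j h =>
      ⟨(mem_Jset_iff.mp h).1, (mem_Jset_iff.mp h).2.1⟩,
    coneOf_eq_hull, ← Submodule.coe_inf, SetLike.coe_set_eq]
  exact le_antisymm (pairCone_Jset_le hdiag) (hull_inf_pairCone_le hdiag hex)

/-- For an exchange-closed set `I`, `ω_J = ω_I ∩ Ω*`, where `ω_I = cone(w_η : η ∈ I)`,
`ω_J = cone(w_η : η ∈ J)` and `Ω* = cone(eᵢ + eⱼ : 1 ≤ i < j ≤ n)`. -/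
theorem stmt_8 (n : ℕ) (hn : 2 ≤ n) (I : Set (Sym2 (Fin (n + 1))))
    (hdiag : ∀ i : Fin (n + 1), s(i, i) ∉ I)
    (hex : ∀ i j k l : Fin (n + 1), s(i, j) ∈ I → s(k, l) ∈ I →
      (s(j, l) ∈ I ∧ s(i, k) ∈ I) ∨ (s(j, k) ∈ I ∧ s(i, l) ∈ I)) :
    coneOf {w | ∃ i j : Fin (n + 1), s(i, j) ∈ Jset n I ∧ w = evec n i + evec n j}
    = coneOf {w | ∃ i j : Fin (n + 1), s(i, j) ∈ I ∧ w = evec n i + evec n j}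
      ∩ coneOf {w | ∃ i j : Fin (n + 1), i ≠ 0 ∧ j ≠ 0 ∧ i ≠ j ∧
          w = evec n i + evec n j} :=
  stmt_8_general n I hdiag hex
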